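/- Let f be a piecewise contracting interval map with separation property whose pieces are X₁ = [c₀,c₁), …, X_N = (c_{N−1}, c_N]. Suppose every discontinuity c_i (1 ≤ i ≤ N−1) is lr-recurrently visited by the orbit of some fixed x ∈ X̃ (i.e., Δ_lr(x) = Δ). Then the itinerary θ of x satisfies p(θ, n) = (N−1)n + 1 for all n ≥ n₀, where n₀ is the smallest integer such that every atom of generation n ≥ n₀ visited by the orbit of x contains at most one discontinuity. -/

import Mathlib

open Set

/-- The contraction pieces of a piecewise contracting interval map on `[c 0, c N]`:
`X₁ = [c₀, c₁)`, `Xᵢ = (c_{i-1}, c_i)` for `1 < i < N`, `X_N = (c_{N-1}, c_N]`. -/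
def ivlPiece (N : ℕ) (c : ℕ → ℝ) (i : Fin N) : Set ℝ :=
  if i.val = 0 then Set.Ico (c 0) (c 1)
  else if i.val = N - 1 then Set.Ioc (c (N - 1)) (c N)
  else Set.Ioo (c i.val) (c (i.val + 1))

/-- The atom of a word `w = [i₁, …, iₙ]`:
`A_{i₁…iₙ} = F_{iₙ} ∘ ⋯ ∘ F_{i₁}(X)`, `F_i(A) = closure (f '' (A ∩ X_i))`, `X = [c 0, c N]`. -/
def ivlAtom (N : ℕ) (c : ℕ → ℝ) (f : ℝ → ℝ) (w : List (Fin N)) : Set ℝ :=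
  w.foldl (fun A i => closure (f '' (A ∩ ivlPiece N c i))) (Set.Icc (c 0) (c N))

/-- The discontinuity set `Δ = {c₁, …, c_{N-1}}`. -/
def ivlDelta (N : ℕ) (c : ℕ → ℝ) : Set ℝ :=
  {y | ∃ i : ℕ, 0 < i ∧ i < N ∧ y = c i}

/-- `Δ_lr^n(x)`: the discontinuities `c_i` that are n-left-right visited by the orbit of
`x`: some atom of generation `n` visited by the orbit of `f^n(x)` contains `c_i` and the
orbit enters it on both sides of `c_i`. -/
def ivlDeltaLRn (N : ℕ) (c : ℕ → ℝ) (f : ℝ → ℝ) (n : ℕ) (x : ℝ) : Set ℝ :=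
  {y | ∃ i : ℕ, ∃ h1 : 0 < i, ∃ h2 : i < N, y = c i ∧
    ∃ w : List (Fin N), w.length = n ∧ y ∈ ivlAtom N c f w ∧
      (∃ t : ℕ, f^[t + n] x ∈ ivlAtom N c f w ∩ ivlPiece N c ⟨i - 1, by omega⟩) ∧
      (∃ t : ℕ, f^[t + n] x ∈ ivlAtom N c f w ∩ ivlPiece N c ⟨i, h2⟩)}

/-- `Δ_lr(x)`: the discontinuities that are left-right recurrently visited. -/
def ivlDeltaLR (N : ℕ) (c : ℕ → ℝ) (f : ℝ → ℝ) (x : ℝ) : Set ℝ :=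
  {y | ∀ n : ℕ, 1 ≤ n → y ∈ ivlDeltaLRn N c f n x}

/-- The word `θ_t θ_{t+1} … θ_{t+n-1}`. -/
def itinWord {N : ℕ} (θ : ℕ → Fin N) (t n : ℕ) : List (Fin N) :=
  (List.range n).map fun k => θ (t + k)

/-- The set of factors of length `n` of `θ`. -/
def seqFactors {N : ℕ} (θ : ℕ → Fin N) (n : ℕ) : Set (List (Fin N)) :=
  {w | ∃ t : ℕ, w = itinWord θ t n}

/-- The complexity function `p(θ, n)`. -/
noncomputable def seqComplexity {N : ℕ} (θ : ℕ → Fin N) (n : ℕ) : ℕ :=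
  (seqFactors θ n).ncard

section Aux

variable {N : ℕ} {c : ℕ → ℝ} {f : ℝ → ℝ}

lemma c_le (hc : ∀ i : ℕ, i < N → c i < c (i + 1)) {a b : ℕ} (hab : a ≤ b) (hb : b ≤ N) :
    c a ≤ c b := by
  induction b with
  | zero => simp_all
  | succ m ih =>
    rcases Nat.lt_or_ge a (m + 1) with h | h
    · exact le_trans (ih (by omega) (by omega)) (le_of_lt (hc m (by omega)))
    · have : a = m + 1 := by omega
      simp [this]

lemma piece_subset (i : Fin N) : ivlPiece N c i ⊆ Set.Icc (c i.val) (c (i.val + 1)) := by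
  have hv : i.val < N := i.isLt
  unfold ivlPiece
  split_ifs with h0 h1
  · rw [h0]
    exact Ico_subset_Icc_self
  · have h2 : i.val + 1 = N := by omega
    rw [h1, show N - 1 + 1 = N from by omega]
    exact Ioc_subset_Icc_self
  · exact Ioo_subset_Icc_self

lemma mem_piece_lt {i : Fin N} {y : ℝ} (hy : y ∈ ivlPiece N c i) (hne : i.val ≠ N - 1) :
    y < c (i.val + 1) := by
  unfold ivlPiece at hy
  split_ifs at hy with h0
  · rw [h0]
    exact hy.2
  · exact hy.2

lemma mem_piece_gt {i : Fin N} {y : ℝ} (hy : y ∈ ivlPiece N c i) (h0 : i.val ≠ 0) :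
    c i.val < y := by
  unfold ivlPiece at hy
  split_ifs at hy with h1 h2
  · exact absurd h1 h0
  · rw [h2]
    exact hy.1
  · exact hy.1

lemma piece_disjoint (hc : ∀ i : ℕ, i < N → c i < c (i + 1)) {i j : Fin N} (hij : i ≠ j) :
    Disjoint (ivlPiece N c i) (ivlPiece N c j) := by
  wlog hlt : i.val < j.val generalizing i j
  · refine (this hij.symm ?_).symm
    rcases Nat.lt_or_ge j.val i.val with h | h
    · exact h
    · exact absurd (Fin.ext (by omega)) hij
  rw [Set.disjoint_left]
  intro y hyi hyj
  have h1 : y < c (i.val + 1) := mem_piece_lt hyi (by omega)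
  have h2 : c j.val < y := mem_piece_gt hyj (by omega)
  have h3 : c (i.val + 1) ≤ c j.val := c_le hc (by omega) (le_of_lt j.isLt)
  linarith

end Aux

section Atoms

variable {N : ℕ} {c : ℕ → ℝ} {f : ℝ → ℝ} {g : Fin N → ℝ → ℝ}

lemma atom_nil : ivlAtom N c f [] = Set.Icc (c 0) (c N) := rfl

lemma atom_concat (w : List (Fin N)) (j : Fin N) :
    ivlAtom N c f (w ++ [j]) = closure (f '' (ivlAtom N c f w ∩ ivlPiece N c j)) := by
  simp [ivlAtom, List.foldl_append]

lemma piece_ord (i : Fin N) : (ivlPiece N c i).OrdConnected := by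
  unfold ivlPiece
  split_ifs
  · exact ordConnected_Ico
  · exact ordConnected_Ioc
  · exact ordConnected_Ioo

lemma piece_closure_compact (i : Fin N) : IsCompact (closure (ivlPiece N c i)) := by
  have h : closure (ivlPiece N c i) ⊆ Set.Icc (c i.val) (c (i.val + 1)) :=
    closure_minimal (piece_subset i) isClosed_Icc
  exact IsCompact.of_isClosed_subset isCompact_Icc isClosed_closure h

lemma image_eq_on (hgf : ∀ i, Set.EqOn (g i) f (ivlPiece N c i)) (j : Fin N)
    (A : Set ℝ) : f '' (A ∩ ivlPiece N c j) = g j '' (A ∩ ivlPiece N c j) :=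
  Set.image_congr fun y hy => (hgf j hy.2).symm

lemma atom_basic (hmap : Set.MapsTo f (Set.Icc (c 0) (c N)) (Set.Icc (c 0) (c N)))
    (hgc : ∀ i, ContinuousOn (g i) (closure (ivlPiece N c i)))
    (hgf : ∀ i, Set.EqOn (g i) f (ivlPiece N c i)) (w : List (Fin N)) :
    IsClosed (ivlAtom N c f w) ∧ ivlAtom N c f w ⊆ Set.Icc (c 0) (c N) ∧
      (ivlAtom N c f w).OrdConnected := by
  induction w using List.reverseRecOn with
  | nil => exact ⟨isClosed_Icc, subset_rfl, ordConnected_Icc⟩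
  | append_singleton w j ih =>
    obtain ⟨hcl, hsub, hord⟩ := ih
    rw [atom_concat]
    refine ⟨isClosed_closure, ?_, ?_⟩
    · refine closure_minimal ?_ isClosed_Icc
      rintro _ ⟨y, hyS, rfl⟩
      exact hmap (hsub hyS.1)
    · rw [image_eq_on hgf]
      have hSord : (ivlAtom N c f w ∩ ivlPiece N c j).OrdConnected :=
        hord.inter (piece_ord j)
      have hSpre : IsPreconnected (g j '' (ivlAtom N c f w ∩ ivlPiece N c j)) :=
        hSord.isPreconnected.image _ ((hgc j).mono fun y hy => subset_closure hy.2)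
      exact hSpre.closure.ordConnected

lemma atom_concat_subset_img (hgc : ∀ i, ContinuousOn (g i) (closure (ivlPiece N c i)))
    (hgf : ∀ i, Set.EqOn (g i) f (ivlPiece N c i)) (w : List (Fin N)) (j : Fin N) :
    ivlAtom N c f (w ++ [j]) ⊆ g j '' closure (ivlPiece N c j) := by
  rw [atom_concat, image_eq_on hgf]
  have himg : IsClosed (g j '' closure (ivlPiece N c j)) :=
    ((piece_closure_compact j).image_of_continuousOn (hgc j)).isClosed
  refine closure_minimal ?_ himg
  exact Set.image_mono fun y hy => subset_closure hy.2

lemma atom_concat_subset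
    (hgc : ∀ i, ContinuousOn (g i) (closure (ivlPiece N c i)))
    (hgf : ∀ i, Set.EqOn (g i) f (ivlPiece N c i)) (w : List (Fin N)) (j : Fin N)
    (hcl : IsClosed (ivlAtom N c f w)) :
    ivlAtom N c f (w ++ [j]) ⊆ g j '' (ivlAtom N c f w ∩ closure (ivlPiece N c j)) := by
  rw [atom_concat, image_eq_on hgf]
  set S := ivlAtom N c f w ∩ ivlPiece N c j with hS
  have hsub1 : closure S ⊆ ivlAtom N c f w ∩ closure (ivlPiece N c j) :=
    Set.subset_inter (closure_minimal Set.inter_subset_left hcl)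
      (closure_mono Set.inter_subset_right)
  have hcomp : IsCompact (closure S) :=
    IsCompact.of_isClosed_subset (piece_closure_compact j) isClosed_closure
      (closure_mono Set.inter_subset_right)
  have himg : IsClosed (g j '' closure S) :=
    (hcomp.image_of_continuousOn ((hgc j).mono (closure_mono Set.inter_subset_right))).isClosed
  exact (closure_minimal (Set.image_mono subset_closure) himg).trans
    (Set.image_mono hsub1)

end Atoms

section Disj

variable {N : ℕ} {c : ℕ → ℝ} {f : ℝ → ℝ} {g : Fin N → ℝ → ℝ}

lemma atoms_disjoint (hmap : Set.MapsTo f (Set.Icc (c 0) (c N)) (Set.Icc (c 0) (c N)))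
    (hgc : ∀ i, ContinuousOn (g i) (closure (ivlPiece N c i)))
    (hgf : ∀ i, Set.EqOn (g i) f (ivlPiece N c i))
    (hginj : ∀ i, Set.InjOn (g i) (closure (ivlPiece N c i)))
    (hgd : ∀ i : Fin N, ∀ j : Fin N, j ≠ i →
      Disjoint (g i '' closure (ivlPiece N c i)) (g j '' closure (ivlPiece N c j))) :
    ∀ n : ℕ, ∀ w w' : List (Fin N), w.length = n → w'.length = n → w ≠ w' →
      Disjoint (ivlAtom N c f w) (ivlAtom N c f w') := by
  intro n
  induction n with
  | zero =>
    intro w w' hw hw' hne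
    rw [List.length_eq_zero_iff] at hw hw'
    exact absurd (hw.trans hw'.symm) hne
  | succ n ih =>
    intro w w' hw hw' hne
    rcases List.eq_nil_or_concat' w with rfl | ⟨u, i, rfl⟩
    · simp at hw
    rcases List.eq_nil_or_concat' w' with rfl | ⟨v, j, rfl⟩
    · simp at hw'
    have hu : u.length = n := by simpa using hw
    have hv : v.length = n := by simpa using hw'
    by_cases hij : i = j
    · subst hij
      have huv : u ≠ v := by
        rintro rfl; exact hne rfl
      have hIH := ih u v hu hv huv
      have h1 := atom_concat_subset (f := f) hgc hgf u i (atom_basic hmap hgc hgf u).1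
      have h2 := atom_concat_subset (f := f) hgc hgf v i (atom_basic hmap hgc hgf v).1
      refine Disjoint.mono h1 h2 ?_
      rw [Set.disjoint_iff_inter_eq_empty,
        ← (hginj i).image_inter Set.inter_subset_right Set.inter_subset_right]
      have : (ivlAtom N c f u ∩ closure (ivlPiece N c i)) ∩
          (ivlAtom N c f v ∩ closure (ivlPiece N c i)) = ∅ := by
        rw [Set.eq_empty_iff_forall_notMem]
        rintro y ⟨⟨hy1, -⟩, ⟨hy2, -⟩⟩
        exact Set.disjoint_left.mp hIH hy1 hy2
      rw [this, Set.image_empty]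
    · exact Disjoint.mono (atom_concat_subset_img hgc hgf u i)
        (atom_concat_subset_img hgc hgf v j)
        (hgd i j fun h => hij h.symm)

end Disj

section Orbit

variable {N : ℕ} {c : ℕ → ℝ} {f : ℝ → ℝ} {g : Fin N → ℝ → ℝ} {x : ℝ} {θ : ℕ → Fin N}

lemma itinWord_length (θ : ℕ → Fin N) (t n : ℕ) : (itinWord θ t n).length = n := by
  simp [itinWord]

lemma itinWord_zero (θ : ℕ → Fin N) (t : ℕ) : itinWord θ t 0 = [] := by simp [itinWord]

lemma itinWord_succ (θ : ℕ → Fin N) (t n : ℕ) :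
    itinWord θ t (n + 1) = itinWord θ t n ++ [θ (t + n)] := by
  simp [itinWord, List.range_succ]

lemma orbit_mem_Icc (hmap : Set.MapsTo f (Set.Icc (c 0) (c N)) (Set.Icc (c 0) (c N)))
    (hx : x ∈ Set.Icc (c 0) (c N)) : ∀ t : ℕ, f^[t] x ∈ Set.Icc (c 0) (c N) := by
  intro t
  induction t with
  | zero => simpa using hx
  | succ t ih =>
    rw [Function.iterate_succ_apply']
    exact hmap ih

lemma orbit_mem_atom (hmap : Set.MapsTo f (Set.Icc (c 0) (c N)) (Set.Icc (c 0) (c N)))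
    (hx : x ∈ Set.Icc (c 0) (c N)) (hθ : ∀ t : ℕ, f^[t] x ∈ ivlPiece N c (θ t)) :
    ∀ t n : ℕ, f^[t + n] x ∈ ivlAtom N c f (itinWord θ t n) := by
  intro t n
  induction n with
  | zero => simpa [itinWord_zero, atom_nil] using orbit_mem_Icc hmap hx t
  | succ n ih =>
    rw [itinWord_succ, atom_concat]
    have h1 : f^[t + (n + 1)] x = f (f^[t + n] x) := by
      rw [show t + (n + 1) = (t + n) + 1 from by omega, Function.iterate_succ_apply']
    rw [h1]
    exact subset_closure ⟨f^[t + n] x, ⟨ih, hθ (t + n)⟩, rfl⟩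

lemma theta_eq (hc : ∀ i : ℕ, i < N → c i < c (i + 1))
    (hθ : ∀ t : ℕ, f^[t] x ∈ ivlPiece N c (θ t)) {t : ℕ} {j : Fin N}
    (h : f^[t] x ∈ ivlPiece N c j) : θ t = j := by
  by_contra hne
  exact Set.disjoint_left.mp (piece_disjoint hc hne) (hθ t) h

lemma word_eq (hmap : Set.MapsTo f (Set.Icc (c 0) (c N)) (Set.Icc (c 0) (c N)))
    (hgc : ∀ i, ContinuousOn (g i) (closure (ivlPiece N c i)))
    (hgf : ∀ i, Set.EqOn (g i) f (ivlPiece N c i))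
    (hginj : ∀ i, Set.InjOn (g i) (closure (ivlPiece N c i)))
    (hgd : ∀ i : Fin N, ∀ j : Fin N, j ≠ i →
      Disjoint (g i '' closure (ivlPiece N c i)) (g j '' closure (ivlPiece N c j)))
    (hx : x ∈ Set.Icc (c 0) (c N)) (hθ : ∀ t : ℕ, f^[t] x ∈ ivlPiece N c (θ t))
    {n s : ℕ} {w : List (Fin N)} (hw : w.length = n) (hmem : f^[s + n] x ∈ ivlAtom N c f w) :
    w = itinWord θ s n := by
  by_contra hne
  exact Set.disjoint_left.mp
    (atoms_disjoint hmap hgc hgf hginj hgd n w (itinWord θ s n) hw (itinWord_length θ s n) hne)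
    hmem (orbit_mem_atom hmap hx hθ s n)

end Orbit

section Comb

variable {N : ℕ} {c : ℕ → ℝ} {f : ℝ → ℝ} {g : Fin N → ℝ → ℝ} {x : ℝ} {θ : ℕ → Fin N}

lemma c_lt (hc : ∀ i : ℕ, i < N → c i < c (i + 1)) {a b : ℕ} (hab : a < b) (hb : b ≤ N) :
    c a < c b := by
  have h1 : c a ≤ c (b - 1) := c_le hc (by omega) (by omega)
  have h2 : c (b - 1) < c b := by
    have := hc (b - 1) (by omega)
    rwa [show b - 1 + 1 = b from by omega] at this
  linarith

lemma c_inj (hc : ∀ i : ℕ, i < N → c i < c (i + 1)) {a b : ℕ} (ha : a ≤ N) (hb : b ≤ N)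
    (h : c a = c b) : a = b := by
  rcases Nat.lt_trichotomy a b with hlt | heq | hgt
  · exact absurd h (ne_of_lt (c_lt hc hlt hb))
  · exact heq
  · exact absurd h.symm (ne_of_lt (c_lt hc hgt ha))

lemma nat_card_aux (S T : Finset ℕ) (hS : S.Nonempty) (h0 : ∀ i ∈ S, 0 < i)
    (h1 : S ⊆ T) (h2 : ∀ i ∈ S, i - 1 ∈ T) : S.card + 1 ≤ T.card := by
  classical
  have hm := S.min'_mem hS
  set m := S.min' hS with hmdef
  have hmS : m - 1 ∉ S := by
    intro h
    have h3 := S.min'_le _ h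
    have h4 := h0 _ hm
    omega
  have hins : insert (m - 1) S ⊆ T := Finset.insert_subset (h2 _ hm) h1
  calc S.card + 1 = (insert (m - 1) S).card := (Finset.card_insert_of_notMem hmS).symm
    _ ≤ T.card := Finset.card_le_card hins

lemma factors_finite (θ : ℕ → Fin N) (n : ℕ) : (seqFactors θ n).Finite :=
  Set.Finite.subset (List.finite_length_eq (Fin N) n)
    (by rintro w ⟨t, rfl⟩; exact itinWord_length θ t n)

lemma ext_visit (hmap : Set.MapsTo f (Set.Icc (c 0) (c N)) (Set.Icc (c 0) (c N)))
    (hx : x ∈ Set.Icc (c 0) (c N)) (hθ : ∀ t : ℕ, f^[t] x ∈ ivlPiece N c (θ t))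
    {n : ℕ} {w : List (Fin N)} {j : Fin N}
    (hw : w.length = n) (hmem : w ++ [j] ∈ seqFactors θ (n + 1)) :
    ∃ t, w = itinWord θ t n ∧ θ (t + n) = j ∧
      f^[t + n] x ∈ ivlAtom N c f w ∩ ivlPiece N c j := by
  obtain ⟨t, ht⟩ := hmem
  rw [itinWord_succ] at ht
  obtain ⟨h1, h2⟩ := List.append_inj ht (by rw [hw, itinWord_length])
  have hj : θ (t + n) = j := by simpa using h2.symm
  refine ⟨t, h1, hj, ?_, ?_⟩
  · rw [h1]; exact orbit_mem_atom hmap hx hθ t n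
  · rw [← hj]; exact hθ (t + n)

end Comb

section Main

variable {N : ℕ} {c : ℕ → ℝ} {f : ℝ → ℝ} {g : Fin N → ℝ → ℝ} {x : ℝ} {θ : ℕ → Fin N}

lemma complexity_core (hN : 2 ≤ N) (hc : ∀ i : ℕ, i < N → c i < c (i + 1))
    (hmap : Set.MapsTo f (Set.Icc (c 0) (c N)) (Set.Icc (c 0) (c N)))
    (hgc : ∀ i, ContinuousOn (g i) (closure (ivlPiece N c i)))
    (hgf : ∀ i, Set.EqOn (g i) f (ivlPiece N c i))
    (hginj : ∀ i, Set.InjOn (g i) (closure (ivlPiece N c i)))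
    (hgd : ∀ i : Fin N, ∀ j : Fin N, j ≠ i →
      Disjoint (g i '' closure (ivlPiece N c i)) (g j '' closure (ivlPiece N c j)))
    (hx : x ∈ Set.Icc (c 0) (c N)) (hθ : ∀ t : ℕ, f^[t] x ∈ ivlPiece N c (θ t))
    (hΔ' : ∀ i : ℕ, 0 < i → i < N → ∀ n : ℕ, 1 ≤ n → c i ∈ ivlDeltaLRn N c f n x) :
    ∀ n : ℕ, 1 ≤ n → seqComplexity θ n = (N - 1) * n + 1 := by
  classical
  set Fct : ℕ → Finset (List (Fin N)) := fun n => (factors_finite θ n).toFinset with hFct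
  have hmemF : ∀ {n : ℕ} {w : List (Fin N)}, w ∈ Fct n ↔ w ∈ seqFactors θ n :=
    fun {n w} => Set.Finite.mem_toFinset _
  have hlenF : ∀ {n : ℕ} {w : List (Fin N)}, w ∈ Fct n → w.length = n := by
    intro n w hw
    obtain ⟨t, rfl⟩ := hmemF.mp hw
    exact itinWord_length θ t n
  have hcardF : ∀ n, seqComplexity θ n = (Fct n).card := fun n =>
    Set.ncard_eq_toFinset_card _ (factors_finite θ n)
  set E : ℕ → List (Fin N) → Finset (Fin N) := fun n w =>
    Finset.univ.filter (fun j => w ++ [j] ∈ seqFactors θ (n + 1)) with hE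
  have hmemE : ∀ {n : ℕ} {w : List (Fin N)} {j : Fin N},
      j ∈ E n w ↔ w ++ [j] ∈ seqFactors θ (n + 1) := by
    intro n w j
    simp [hE]
  set D : List (Fin N) → Finset ℕ := fun w =>
    (Finset.Ioo 0 N).filter (fun i => c i ∈ ivlAtom N c f w) with hD
  -- step A: biUnion decomposition
  have hbi : ∀ n, Fct (n + 1) =
      (Fct n).biUnion (fun w => (E n w).image (fun j => w ++ [j])) := by
    intro n
    ext u
    constructor
    · intro hu
      obtain ⟨t, rfl⟩ := hmemF.mp hu
      rw [itinWord_succ]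
      refine Finset.mem_biUnion.mpr ⟨itinWord θ t n, hmemF.mpr ⟨t, rfl⟩,
        Finset.mem_image.mpr ⟨θ (t + n), hmemE.mpr ?_, rfl⟩⟩
      rw [← itinWord_succ]
      exact ⟨t, rfl⟩
    · intro hu
      obtain ⟨w, hw, hu2⟩ := Finset.mem_biUnion.mp hu
      obtain ⟨j, hj, rfl⟩ := Finset.mem_image.mp hu2
      exact hmemF.mpr (hmemE.mp hj)
  -- step B: cardinal identity
  have hstepcard : ∀ n, (Fct (n + 1)).card = ∑ w ∈ Fct n, (E n w).card := by
    intro n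
    rw [hbi n, Finset.card_biUnion]
    · refine Finset.sum_congr rfl fun w hw => Finset.card_image_of_injective _ ?_
      intro a b hab
      simpa using List.append_cancel_left hab
    · intro w hw w' hw' hne
      rw [Function.onFun, Finset.disjoint_left]
      rintro u hu hu'
      obtain ⟨j, hj, rfl⟩ := Finset.mem_image.mp hu
      obtain ⟨j', hj', heq⟩ := Finset.mem_image.mp hu'
      have hlen : w.length = w'.length := by rw [hlenF hw, hlenF hw']
      exact hne (List.append_inj heq.symm hlen).1
  -- extensions are nonempty
  have hEne : ∀ n, ∀ w ∈ Fct n, (E n w).Nonempty := by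
    intro n w hw
    obtain ⟨t, rfl⟩ := hmemF.mp hw
    refine ⟨θ (t + n), hmemE.mpr ?_⟩
    rw [← itinWord_succ]
    exact ⟨t, rfl⟩
  -- step D: branching bounded by discontinuities in the atom
  have hDcard : ∀ n, ∀ w ∈ Fct n, (E n w).card ≤ (D w).card + 1 := by
    intro n w hw
    by_cases hE1 : (E n w).card ≤ 1
    · omega
    have hne : (E n w).Nonempty := Finset.card_pos.mp (by omega)
    set M := (E n w).max' hne with hM
    have hMmem := (E n w).max'_mem hne
    have hMlt : M.val < N := M.isLt
    have key : ∀ j ∈ (E n w).erase M, j.val + 1 ∈ D w := by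
      intro j hj
      obtain ⟨hjne, hjE⟩ := Finset.mem_erase.mp hj
      have hjleM : j ≤ M := Finset.le_max' _ _ hjE
      have hjM : j.val < M.val := by
        rcases lt_or_eq_of_le hjleM with h | h
        · exact h
        · exact absurd h hjne
      obtain ⟨t, hteq, htθ, hy1a, hy1p⟩ := ext_visit hmap hx hθ (hlenF hw) (hmemE.mp hjE)
      obtain ⟨s, hseq, hsθ, hy2a, hy2p⟩ := ext_visit hmap hx hθ (hlenF hw) (hmemE.mp hMmem)
      have h1 : f^[t + n] x < c (j.val + 1) := mem_piece_lt hy1p (by omega)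
      have h2 : c M.val < f^[s + n] x := mem_piece_gt hy2p (by omega)
      have h3 : c (j.val + 1) ≤ c M.val := c_le hc (by omega) (le_of_lt hMlt)
      have hord := (atom_basic hmap hgc hgf w).2.2
      have hmemat : c (j.val + 1) ∈ ivlAtom N c f w :=
        hord.out hy1a hy2a ⟨le_of_lt h1, by linarith⟩
      exact Finset.mem_filter.mpr ⟨Finset.mem_Ioo.mpr ⟨by omega, by omega⟩, hmemat⟩
    have hinj : Set.InjOn (fun j : Fin N => j.val + 1) ((E n w).erase M) := by
      intro a _ b _ hab
      exact Fin.ext (by simpa using hab)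
    have hle := Finset.card_le_card_of_injOn _ key hinj
    rw [Finset.card_erase_of_mem hMmem] at hle
    omega
  -- step E: total discontinuity count bounded by N - 1
  have hDsum : ∀ n, ∑ w ∈ Fct n, (D w).card ≤ N - 1 := by
    intro n
    have hdisjD : ∀ w ∈ Fct n, ∀ w' ∈ Fct n, w ≠ w' → Disjoint (D w) (D w') := by
      intro w hw w' hw' hne
      rw [Finset.disjoint_left]
      intro i hi hi'
      have h1 := (Finset.mem_filter.mp hi).2
      have h2 := (Finset.mem_filter.mp hi').2
      exact Set.disjoint_left.mp
        (atoms_disjoint hmap hgc hgf hginj hgd n w w' (hlenF hw) (hlenF hw') hne) h1 h2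
    calc ∑ w ∈ Fct n, (D w).card = ((Fct n).biUnion D).card :=
          (Finset.card_biUnion hdisjD).symm
      _ ≤ (Finset.Ioo 0 N).card := by
          refine Finset.card_le_card ?_
          intro i hi
          obtain ⟨w, hw, hiw⟩ := Finset.mem_biUnion.mp hi
          exact (Finset.mem_filter.mp hiw).1
      _ = N - 1 := by simp [Nat.card_Ioo]
  -- step F: lower bound from lr-recurrent visits
  have hlow : ∀ n, 1 ≤ n → N - 1 ≤ ∑ w ∈ Fct n, ((E n w).card - 1) := by
    intro n hn
    have hch : ∀ i ∈ Finset.Ioo 0 N, ∃ w, w ∈ Fct n ∧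
        ∀ j : Fin N, (j.val = i - 1 ∨ j.val = i) → j ∈ E n w := by
      intro i hi
      obtain ⟨hi0, hiN⟩ := Finset.mem_Ioo.mp hi
      obtain ⟨i', h1', h2', heq, w, hwlen, hcw, ⟨t, ht⟩, ⟨s, hs⟩⟩ := hΔ' i hi0 hiN n hn
      have hii' : i = i' := c_inj hc (le_of_lt hiN) (le_of_lt h2') heq
      subst hii'
      have hwt : w = itinWord θ t n := word_eq hmap hgc hgf hginj hgd hx hθ hwlen ht.1
      have hws : w = itinWord θ s n := word_eq hmap hgc hgf hginj hgd hx hθ hwlen hs.1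
      have hθt := theta_eq hc hθ ht.2
      have hθs := theta_eq hc hθ hs.2
      refine ⟨w, hmemF.mpr ⟨t, hwt⟩, ?_⟩
      intro j hj
      rcases hj with hj | hj
      · refine hmemE.mpr ⟨t, ?_⟩
        rw [itinWord_succ, ← hwt]
        have : j = θ (t + n) := by
          rw [hθt]; exact Fin.ext (by simpa using hj)
        rw [← this]
      · refine hmemE.mpr ⟨s, ?_⟩
        rw [itinWord_succ, ← hws]
        have : j = θ (s + n) := by
          rw [hθs]; exact Fin.ext (by simpa using hj)
        rw [← this]
    choose! W hW1 hW2 using hch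
    have hsum : ∑ w ∈ Fct n, ((Finset.Ioo 0 N).filter (fun i => W i = w)).card = N - 1 := by
      rw [← Finset.card_eq_sum_card_fiberwise hW1]
      simp [Nat.card_Ioo]
    rw [← hsum]
    refine Finset.sum_le_sum ?_
    intro w hw
    by_cases hSne : ((Finset.Ioo 0 N).filter (fun i => W i = w)).Nonempty
    · set S := (Finset.Ioo 0 N).filter (fun i => W i = w) with hS
      have hrange : ∀ i ∈ S, 0 < i ∧ i < N := by
        intro i hi
        exact Finset.mem_Ioo.mp (Finset.mem_filter.mp hi).1
      have h1 : S ⊆ (E n w).image Fin.val := by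
        intro i hi
        obtain ⟨hio, hWi⟩ := Finset.mem_filter.mp hi
        have hiN := (Finset.mem_Ioo.mp hio).2
        have hj : (⟨i, hiN⟩ : Fin N) ∈ E n w := by
          rw [← hWi]
          exact hW2 i hio ⟨i, hiN⟩ (Or.inr rfl)
        exact Finset.mem_image.mpr ⟨⟨i, hiN⟩, hj, rfl⟩
      have h2 : ∀ i ∈ S, i - 1 ∈ (E n w).image Fin.val := by
        intro i hi
        obtain ⟨hio, hWi⟩ := Finset.mem_filter.mp hi
        have hiN := (Finset.mem_Ioo.mp hio).2
        have hj : (⟨i - 1, by omega⟩ : Fin N) ∈ E n w := by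
          rw [← hWi]
          exact hW2 i hio ⟨i - 1, by omega⟩ (Or.inl rfl)
        exact Finset.mem_image.mpr ⟨⟨i - 1, by omega⟩, hj, rfl⟩
      have hcard := nat_card_aux S _ hSne (fun i hi => (hrange i hi).1) h1 h2
      rw [Finset.card_image_of_injective _ Fin.val_injective] at hcard
      omega
    · rw [Finset.not_nonempty_iff_eq_empty.mp hSne]
      simp
  -- increments
  have hstep : ∀ n, 1 ≤ n → (Fct (n + 1)).card = (Fct n).card + (N - 1) := by
    intro n hn
    have hEq : ∑ w ∈ Fct n, ((E n w).card - 1) = N - 1 := by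
      refine le_antisymm (le_trans (Finset.sum_le_sum ?_) (hDsum n)) (hlow n hn)
      intro w hw
      have := hDcard n w hw
      omega
    have hsplit : ∑ w ∈ Fct n, (E n w).card
        = ∑ w ∈ Fct n, ((E n w).card - 1) + (Fct n).card := by
      have : ∀ w ∈ Fct n, (E n w).card = ((E n w).card - 1) + 1 := by
        intro w hw
        have := Finset.card_pos.mpr (hEne n w hw)
        omega
      rw [Finset.sum_congr rfl this, Finset.sum_add_distrib]
      simp
    rw [hstepcard n, hsplit, hEq]
    omega
  -- base case: p 1 = N
  have hbase : (Fct 1).card = N := by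
    have himg : Fct 1 = Finset.univ.image (fun j : Fin N => [j]) := by
      ext u
      rw [hmemF]
      constructor
      · rintro ⟨t, rfl⟩
        refine Finset.mem_image.mpr ⟨θ t, Finset.mem_univ _, ?_⟩
        simp [itinWord, List.range_succ]
      · intro hu
        obtain ⟨j, -, rfl⟩ := Finset.mem_image.mp hu
        by_cases hj : j.val < N - 1
        · obtain ⟨i', h1', h2', heq, w, hwlen, hcw, ⟨t, ht⟩, -⟩ :=
            hΔ' (j.val + 1) (by omega) (by omega) 1 le_rfl
          have hii' : j.val + 1 = i' := c_inj hc (by omega) (le_of_lt h2') heq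
          subst hii'
          have hθt := theta_eq hc hθ ht.2
          refine ⟨t + 1, ?_⟩
          have hjeq : j = θ (t + 1) := by
            rw [hθt]; exact Fin.ext (by simp)
          rw [hjeq]
          simp [itinWord, List.range_succ]
        · have hj' : j.val = N - 1 := by
            have := j.isLt; omega
          obtain ⟨i', h1', h2', heq, w, hwlen, hcw, -, ⟨s, hs⟩⟩ :=
            hΔ' (N - 1) (by omega) (by omega) 1 le_rfl
          have hii' : N - 1 = i' := c_inj hc (by omega) (le_of_lt h2') heq
          subst hii'
          have hθs := theta_eq hc hθ hs.2
          refine ⟨s + 1, ?_⟩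
          have hjeq : j = θ (s + 1) := by
            rw [hθs]; exact Fin.ext (by simp [hj'])
          rw [hjeq]
          simp [itinWord, List.range_succ]
    rw [himg, Finset.card_image_of_injective _ (fun a b hab => by simpa using hab)]
    simp
  -- conclusion
  intro n hn
  rw [hcardF]
  induction n, hn using Nat.le_induction with
  | base =>
    rw [hbase]
    omega
  | succ n hn ih =>
    rw [hstep n hn, ih]
    have h1 : 1 ≤ N := by omega
    cases' Nat.exists_eq_add_of_le h1 with k hk
    subst hk
    ring_nf


end Main

/-- If all the discontinuities are lr-recurrently visited by the orbit of `x`, then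
`p(θ,n) = (N−1)n + 1` for all `n ≥ n₀`. -/
theorem stmt19
    (N : ℕ) (hN : 2 ≤ N) (c : ℕ → ℝ) (hc : ∀ i : ℕ, i < N → c i < c (i + 1))
    (f : ℝ → ℝ) (hmap : Set.MapsTo f (Set.Icc (c 0) (c N)) (Set.Icc (c 0) (c N)))
    (lam : ℝ) (hlam : lam ∈ Set.Ioo (0 : ℝ) 1)
    (hcontr : ∀ i : Fin N, ∀ x ∈ ivlPiece N c i, ∀ y ∈ ivlPiece N c i,
      |f x - f y| ≤ lam * |x - y|)
    (hsep : ∃ g : Fin N → ℝ → ℝ, ∀ i : Fin N,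
      ContinuousOn (g i) (closure (ivlPiece N c i)) ∧
      Set.EqOn (g i) f (ivlPiece N c i) ∧
      Set.InjOn (g i) (closure (ivlPiece N c i)) ∧
      ∀ j : Fin N, j ≠ i →
        Disjoint (g i '' closure (ivlPiece N c i)) (g j '' closure (ivlPiece N c j)))
    (x : ℝ) (hx : x ∈ Set.Icc (c 0) (c N))
    (hxD : ∀ t : ℕ, f^[t] x ∉ ivlDelta N c)
    (θ : ℕ → Fin N) (hθ : ∀ t : ℕ, f^[t] x ∈ ivlPiece N c (θ t))
    (hΔ : ivlDeltaLR N c f x = ivlDelta N c)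
    (n₀ : ℕ) (hn₀ : IsLeast {m : ℕ | 1 ≤ m ∧ ∀ n : ℕ, m ≤ n → ∀ w : List (Fin N),
      w.length = n → (∃ t : ℕ, f^[t + n] x ∈ ivlAtom N c f w) →
      (ivlAtom N c f w ∩ ivlDelta N c).ncard ≤ 1} n₀)
    :
    ∀ n : ℕ, n₀ ≤ n → seqComplexity θ n = (N - 1) * n + 1 := by
  obtain ⟨g, hg⟩ := hsep
  have hgc : ∀ i, ContinuousOn (g i) (closure (ivlPiece N c i)) := fun i => (hg i).1
  have hgf : ∀ i, Set.EqOn (g i) f (ivlPiece N c i) := fun i => (hg i).2.1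
  have hginj : ∀ i, Set.InjOn (g i) (closure (ivlPiece N c i)) := fun i => (hg i).2.2.1
  have hgd : ∀ i : Fin N, ∀ j : Fin N, j ≠ i →
      Disjoint (g i '' closure (ivlPiece N c i)) (g j '' closure (ivlPiece N c j)) :=
    fun i j hj => (hg i).2.2.2 j hj
  have hΔ' : ∀ i : ℕ, 0 < i → i < N → ∀ n : ℕ, 1 ≤ n → c i ∈ ivlDeltaLRn N c f n x := by
    intro i hi0 hiN n hn
    have hmem : c i ∈ ivlDelta N c := ⟨i, hi0, hiN, rfl⟩
    rw [← hΔ] at hmem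
    exact hmem n hn
  intro n hn
  exact complexity_core hN hc hmap hgc hgf hginj hgd hx hθ hΔ' n (le_trans hn₀.1.1 hn)
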